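/- For every N ≥ 1, the sandpile group G_{Γ_N} on an N×N square domain Γ_N ⊂ ℤ² contains a subgroup isomorphic to the direct sum of N copies of the cyclic group ℤ/4ℤ. -/

import Mathlib

/-!
The Laplacian of a finite domain is injective by the maximum principle: at the rightmost point
where a positive maximum is attained the Laplacian is negative. Hence every sandpile group is
finite.

On the square, for `k = 1, …, N` let `h_k` be the function that is `±1`, alternating from row to
row, on one parity class of the tilted rectangle `|a - b| < k < a + b < 2N + 2 - k`, and `0`
elsewhere. It satisfies `Δ h_k = -4 h_k`, so by self-adjointness of `Δ` pairing with `h_k`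
modulo `4` is a character of the sandpile group. On the bottom row `h_k (j, 1) = δ_{jk}`, so these
characters form a surjection onto `(ℤ/4ℤ)^N`, and by duality a finite abelian group contains a
copy of each of its quotients.
-/

/-- Two vertices of `ℤ²` are adjacent iff their Euclidean distance is `1`. -/
def adj (u v : ℤ × ℤ) : Prop := (u.1 - v.1) ^ 2 + (u.2 - v.2) ^ 2 = 1

instance : DecidableRel adj := fun u v => by unfold adj; infer_instance

/-- The reduced Laplacian of a finite domain `Γ ⊂ ℤ²`. -/
def lap {R : Type*} [CommRing R] (Γ : Finset (ℤ × ℤ)) (f : ↥Γ → R) : ↥Γ → R :=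
  fun v => (∑ w ∈ Γ.attach.filter (fun w => adj w.1 v.1), f w) - 4 * f v

lemma lap_add {R : Type*} [CommRing R] (Γ : Finset (ℤ × ℤ)) (f g : ↥Γ → R) :
    lap Γ (f + g) = lap Γ f + lap Γ g := by
  funext v; simp [lap, Finset.sum_add_distrib]; ring

lemma lap_neg {R : Type*} [CommRing R] (Γ : Finset (ℤ × ℤ)) (f : ↥Γ → R) :
    lap Γ (-f) = -(lap Γ f) := by
  funext v; simp [lap]; ring

lemma lap_smul {R : Type*} [CommRing R] (Γ : Finset (ℤ × ℤ)) (c : R) (f : ↥Γ → R) :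
    lap Γ (c • f) = c • lap Γ f := by
  funext v
  simp only [lap, Pi.smul_apply, smul_eq_mul, mul_sub, Finset.mul_sum]
  ring

lemma lap_zero {R : Type*} [CommRing R] (Γ : Finset (ℤ × ℤ)) :
    lap Γ (0 : ↥Γ → R) = 0 := by
  funext v; simp [lap]

/-- The boundary `∂Γ`: vertices of `Γ` adjacent to some vertex of `ℤ² \ Γ`. -/
noncomputable def boundary (Γ : Finset (ℤ × ℤ)) : Finset (ℤ × ℤ) :=
  @Finset.filter _ (fun v => ∃ w : ℤ × ℤ, w ∉ Γ ∧ adj w v) (Classical.decPred _) Γ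

lemma boundary_subset (Γ : Finset (ℤ × ℤ)) : boundary Γ ⊆ Γ :=
  @Finset.filter_subset _ (fun v => ∃ w : ℤ × ℤ, w ∉ Γ ∧ adj w v) (Classical.decPred _) Γ

/-- A function on `Γ` is harmonic if its Laplacian vanishes on the interior `Γ \ ∂Γ`. -/
def Harmonic {R : Type*} [CommRing R] (Γ : Finset (ℤ × ℤ)) (f : ↥Γ → R) : Prop :=
  ∀ v : ↥Γ, (v : ℤ × ℤ) ∉ boundary Γ → lap Γ f v = 0

/-- `Γ ⊂ ℤ²` is a convex domain if it is the set of lattice points of a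
convex open subset of `ℝ²`. -/
def IsConvexDomain (Γ : Finset (ℤ × ℤ)) : Prop :=
  ∃ P : Set (ℝ × ℝ), Convex ℝ P ∧ IsOpen P ∧
    ∀ v : ℤ × ℤ, v ∈ Γ ↔ ((v.1 : ℝ), (v.2 : ℝ)) ∈ P

/-- The reduced Laplacian as an additive group homomorphism on `ℤ^Γ`. -/
def lapHom (Γ : Finset (ℤ × ℤ)) : (↥Γ → ℤ) →+ (↥Γ → ℤ) where
  toFun := lap Γ
  map_zero' := lap_zero Γ
  map_add' := lap_add Γ

/-- The sandpile group `G_Γ = ℤ^Γ / Δ_Γ(ℤ^Γ)`. -/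
def SandpileGroup (Γ : Finset (ℤ × ℤ)) : Type :=
  (↥Γ → ℤ) ⧸ (lapHom Γ).range

instance (Γ : Finset (ℤ × ℤ)) : AddCommGroup (SandpileGroup Γ) :=
  inferInstanceAs (AddCommGroup ((↥Γ → ℤ) ⧸ (lapHom Γ).range))

/-- The canonical projection `ℤ^Γ → G_Γ`. -/
def sandMk (Γ : Finset (ℤ × ℤ)) : (↥Γ → ℤ) →+ SandpileGroup Γ :=
  QuotientAddGroup.mk' _

/-- The `N×N` square domain `Γ_N = {1, …, N} × {1, …, N} ⊂ ℤ²`. -/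
noncomputable def squareDomain (N : ℕ) : Finset (ℤ × ℤ) :=
  Finset.Icc 1 (N : ℤ) ×ˢ Finset.Icc 1 (N : ℤ)

lemma adj_comm {u v : ℤ × ℤ} : adj u v ↔ adj v u := by
  unfold adj
  constructor <;> intro h <;> linear_combination h

lemma adj_iff_mem {w v : ℤ × ℤ} :
    adj w v ↔ w ∈ ({(v.1 + 1, v.2), (v.1 - 1, v.2), (v.1, v.2 + 1), (v.1, v.2 - 1)} :
      Finset (ℤ × ℤ)) := by
  obtain ⟨a, b⟩ := w
  obtain ⟨c, d⟩ := v
  simp only [adj, Finset.mem_insert, Finset.mem_singleton, Prod.mk.injEq]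
  constructor
  · intro h
    have : (a - c) * (a - c) ≤ 1 := by nlinarith
    have : (b - d) * (b - d) ≤ 1 := by nlinarith
    have : -1 ≤ a - c ∧ a - c ≤ 1 := by constructor <;> nlinarith
    have : -1 ≤ b - d ∧ b - d ≤ 1 := by constructor <;> nlinarith
    rcases (by omega : a - c = -1 ∨ a - c = 0 ∨ a - c = 1) with hx | hx | hx <;>
    rcases (by omega : b - d = -1 ∨ b - d = 0 ∨ b - d = 1) with hy | hy | hy <;>
      rw [hx, hy] at h <;> norm_num at h <;> omega
  · rintro (⟨rfl, rfl⟩ | ⟨rfl, rfl⟩ | ⟨rfl, rfl⟩ | ⟨rfl, rfl⟩) <;> ring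

section Laplacian

variable {R : Type*} [CommRing R] {Γ : Finset (ℤ × ℤ)}

def extendByZero (Γ : Finset (ℤ × ℤ)) (f : ↥Γ → R) (w : ℤ × ℤ) : R :=
  if h : w ∈ Γ then f ⟨w, h⟩ else 0

lemma extendByZero_of_notMem {f : ↥Γ → R} {w : ℤ × ℤ} (h : w ∉ Γ) : extendByZero Γ f w = 0 :=
  dif_neg h

lemma extendByZero_restrict {h : ℤ × ℤ → R} (hsupp : ∀ w ∉ Γ, h w = 0) :
    extendByZero Γ (fun v => h v) = h := by
  funext w
  unfold extendByZero
  split_ifs with hw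
  · rfl
  · exact (hsupp w hw).symm

lemma lap_apply (f : ↥Γ → R) (v : ↥Γ) :
    lap Γ f v = extendByZero Γ f (v.1.1 + 1, v.1.2) + extendByZero Γ f (v.1.1 - 1, v.1.2) +
      extendByZero Γ f (v.1.1, v.1.2 + 1) + extendByZero Γ f (v.1.1, v.1.2 - 1) - 4 * f v := by
  classical
  obtain ⟨⟨a, b⟩, hv⟩ := v
  have hsum : ∑ w ∈ Γ.attach.filter (fun w => adj w.1 (a, b)), f w =
      ∑ w ∈ Γ.filter (fun w => adj w (a, b)), extendByZero Γ f w := by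
    rw [Finset.sum_filter, Finset.sum_filter, ← Finset.sum_attach Γ]
    refine Finset.sum_congr rfl fun w _ => ?_
    simp [extendByZero]
  have hnbrs : ∑ w ∈ Γ.filter (fun w => adj w (a, b)), extendByZero Γ f w =
      ∑ w ∈ {(a + 1, b), (a - 1, b), (a, b + 1), (a, b - 1)}, extendByZero Γ f w := by
    refine Finset.sum_subset (fun w hw => adj_iff_mem.1 (Finset.mem_filter.1 hw).2)
      fun w hw hw' => extendByZero_of_notMem fun hΓ => hw' ?_
    exact Finset.mem_filter.2 ⟨hΓ, adj_iff_mem.2 hw⟩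
  simp only [lap, hsum, hnbrs]
  rw [Finset.sum_insert (by simp; omega), Finset.sum_insert (by simp),
    Finset.sum_insert (by simp; omega), Finset.sum_singleton]
  ring

lemma dotProduct_lap_comm (g f : ↥Γ → R) : g ⬝ᵥ lap Γ f = lap Γ g ⬝ᵥ f := by
  classical
  simp only [dotProduct, lap, Finset.sum_filter, mul_sub, sub_mul, Finset.mul_sum, Finset.sum_mul,
    Finset.sum_sub_distrib, ← Finset.univ_eq_attach]
  congr 1
  · rw [Finset.sum_comm]
    refine Finset.sum_congr rfl fun v _ => Finset.sum_congr rfl fun w _ => ?_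
    simp only [adj_comm (u := (v : ℤ × ℤ))]
    split_ifs <;> ring
  · exact Finset.sum_congr rfl fun v _ => by ring

end Laplacian

section MaximumPrinciple

variable {R : Type*} [CommRing R] [LinearOrder R] [IsStrictOrderedRing R] {Γ : Finset (ℤ × ℤ)}

lemma lap_neg_of_isMax {f : ↥Γ → R} {v : ↥Γ} (hmax : ∀ w, f w ≤ f v) (hpos : 0 < f v)
    (hright : ∀ h : (v.1.1 + 1, v.1.2) ∈ Γ, f ⟨_, h⟩ < f v) : lap Γ f v < 0 := by
  have hlt : extendByZero Γ f (v.1.1 + 1, v.1.2) < f v := by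
    unfold extendByZero
    split_ifs with h
    exacts [hright h, hpos]
  have hle (w : ℤ × ℤ) : extendByZero Γ f w ≤ f v := by
    unfold extendByZero
    split_ifs
    exacts [hmax _, hpos.le]
  rw [lap_apply]
  linarith [hle (v.1.1 - 1, v.1.2), hle (v.1.1, v.1.2 + 1), hle (v.1.1, v.1.2 - 1)]

lemma nonpos_of_lap_eq_zero {f : ↥Γ → R} (hf : lap Γ f = 0) (v : ↥Γ) : f v ≤ 0 := by
  classical
  by_contra! hv
  obtain ⟨v₀, -, hv₀⟩ := Finset.univ.exists_max_image f ⟨v, Finset.mem_univ v⟩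
  obtain ⟨u, hu, hright⟩ := (Finset.univ.filter (f · = f v₀)).exists_max_image (fun u => u.1.1)
    ⟨v₀, by simp⟩
  rw [Finset.mem_filter] at hu
  have hmax : ∀ w, f w ≤ f u := fun w => hu.2 ▸ hv₀ w (Finset.mem_univ w)
  refine (lap_neg_of_isMax hmax (hv.trans_le (hmax v)) fun h => ?_).ne (congrFun hf u)
  refine (hmax _).lt_of_ne fun heq => ?_
  have := hright ⟨_, h⟩ (Finset.mem_filter.2 ⟨Finset.mem_univ _, heq.trans hu.2⟩)
  simp at this

lemma eq_zero_of_lap_eq_zero {f : ↥Γ → R} (hf : lap Γ f = 0) : f = 0 := by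
  have hneg : lap Γ (-f) = 0 := by rw [lap_neg, hf, neg_zero]
  funext v
  exact le_antisymm (nonpos_of_lap_eq_zero hf v) (neg_nonpos.1 (nonpos_of_lap_eq_zero hneg v))

end MaximumPrinciple

lemma lapHom_injective (Γ : Finset (ℤ × ℤ)) : Function.Injective (lapHom Γ) :=
  (injective_iff_map_eq_zero _).2 fun _ => eq_zero_of_lap_eq_zero

instance (Γ : Finset (ℤ × ℤ)) : Finite (SandpileGroup Γ) :=
  (lapHom Γ).toIntLinearMap.range.finiteQuotientOfFreeOfRankEq
    (LinearMap.finrank_range_of_inj (lapHom_injective Γ))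

section Characters

variable {Γ : Finset (ℤ × ℤ)}

def sandpileChar (n : ℕ) (g : ↥Γ → ℤ) (hg : ∀ v, (n : ℤ) ∣ lap Γ g v) :
    SandpileGroup Γ →+ ZMod n :=
  QuotientAddGroup.lift _
    ((Int.castAddHom (ZMod n)).comp (AddMonoidHom.mk' (g ⬝ᵥ ·) (dotProduct_add g)))
    (by
      rintro _ ⟨f, rfl⟩
      change ((g ⬝ᵥ lap Γ f : ℤ) : ZMod n) = 0
      rw [dotProduct_lap_comm, ZMod.intCast_zmod_eq_zero_iff_dvd]
      exact Finset.dvd_sum fun v _ => dvd_mul_of_dvd_left (hg v) _)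

lemma sandpileChar_mk_single [DecidableEq ↥Γ] (n : ℕ) (g : ↥Γ → ℤ)
    (hg : ∀ v, (n : ℤ) ∣ lap Γ g v) (p : ↥Γ) :
    sandpileChar n g hg (sandMk Γ (Pi.single p 1)) = g p := by
  change ((g ⬝ᵥ Pi.single p 1 : ℤ) : ZMod n) = g p
  rw [dotProduct_single, mul_one]

end Characters

lemma AddMonoidHom.surjective_of_single_mem_range {A ι : Type*} [AddGroup A] [Fintype ι]
    [DecidableEq ι] {n : ℕ} (φ : A →+ (ι → ZMod n)) (h : ∀ j, Pi.single j 1 ∈ φ.range) :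
    Function.Surjective φ := by
  intro t
  suffices t ∈ φ.range from this
  rw [← Finset.univ_sum_single t]
  refine AddSubgroup.sum_mem _ fun j _ => ?_
  obtain ⟨z, hz⟩ := ZMod.intCast_surjective (t j)
  rw [← hz, ← Int.smul_one_eq_cast, Pi.single_smul]
  exact AddSubgroup.zsmul_mem _ (h j) z

/-- Precomposition with `φ` embeds the dual of `H` into the dual of `A`, and finite abelian
groups are isomorphic to their duals. -/
theorem AddCommGroup.exists_addSubgroup_addEquiv_of_surjective {A H : Type*} [AddCommGroup A]
    [Finite A] [AddCommGroup H] (φ : A →+ H) (hφ : Function.Surjective φ) :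
    ∃ S : AddSubgroup A, Nonempty (S ≃+ H) := by
  have : Finite H := Finite.of_surjective φ hφ
  have : NeZero ((Monoid.exponent (Multiplicative A) : ℕ) : ℂ) :=
    ⟨Nat.cast_ne_zero.2 Monoid.exponent_ne_zero_of_finite⟩
  have : NeZero ((Monoid.exponent (Multiplicative H) : ℕ) : ℂ) :=
    ⟨Nat.cast_ne_zero.2 Monoid.exponent_ne_zero_of_finite⟩
  obtain ⟨dualA⟩ := CommGroup.monoidHom_mulEquiv_of_hasEnoughRootsOfUnity (Multiplicative A) ℂ
  obtain ⟨dualH⟩ := CommGroup.monoidHom_mulEquiv_of_hasEnoughRootsOfUnity (Multiplicative H) ℂ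
  let pullback := MonoidHom.compHom' (M := Multiplicative A) (P := ℂˣ) φ.toMultiplicative
  have hpullback : Function.Injective pullback := fun _ _ h =>
    (MonoidHom.cancel_right (f := φ.toMultiplicative) hφ).1 h
  let ψ : H →+ A :=
    MonoidHom.toAdditive (dualA.toMonoidHom.comp (pullback.comp dualH.symm.toMonoidHom))
  have hψ : Function.Injective ψ := dualA.injective.comp (hpullback.comp dualH.symm.injective)
  exact ⟨ψ.range, ⟨(AddMonoidHom.ofInjective hψ).symm⟩⟩

section SquareEigenfunctions

variable (N : ℕ)

lemma mem_squareDomain {w : ℤ × ℤ} :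
    w ∈ squareDomain N ↔ 1 ≤ w.1 ∧ w.1 ≤ N ∧ 1 ≤ w.2 ∧ w.2 ≤ N := by
  simp [squareDomain, and_assoc]

/-- In the coordinates `a + b` and `a - b` this is the indicator of a rectangle, restricted to
one parity class. -/
def diamondIndicator (k : ℤ) (w : ℤ × ℤ) : ℤ :=
  if w.2 - w.1 < k ∧ w.1 - w.2 < k ∧ k < w.1 + w.2 ∧ w.1 + w.2 < 2 * N + 2 - k ∧
      (w.1 + w.2 + k) % 2 = 1 then 1 else 0

/-- The corners of the rectangle lie just outside the square, so inside the square the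
indicator satisfies the discrete wave equation. -/
lemma diamondIndicator_wave (k a b : ℤ) (hab : (a, b) ∈ squareDomain N) :
    diamondIndicator N k (a + 1, b) + diamondIndicator N k (a - 1, b) =
      diamondIndicator N k (a, b + 1) + diamondIndicator N k (a, b - 1) := by
  rw [mem_squareDomain] at hab
  unfold diamondIndicator
  split_ifs <;> omega

def squareEigenfunction (k : ℤ) (w : ℤ × ℤ) : ℤ :=
  (w.2 - 1).negOnePow * diamondIndicator N k w

lemma squareEigenfunction_eq_zero {k : ℤ} {w : ℤ × ℤ} (hw : w ∉ squareDomain N) :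
    squareEigenfunction N k w = 0 := by
  rw [mem_squareDomain] at hw
  unfold squareEigenfunction diamondIndicator
  split_ifs <;> omega

lemma squareEigenfunction_bottom_row {k j : ℤ} (hj : (j, 1) ∈ squareDomain N) :
    squareEigenfunction N k (j, 1) = if j = k then 1 else 0 := by
  rw [mem_squareDomain] at hj
  unfold squareEigenfunction diamondIndicator
  simp only [sub_self, Int.negOnePow_zero, Units.val_one, one_mul]
  split_ifs <;> omega

lemma lap_squareEigenfunction (k : ℤ) (v : ↥(squareDomain N)) :
    lap (squareDomain N) (fun w => squareEigenfunction N k w) v =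
      -4 * squareEigenfunction N k v := by
  obtain ⟨⟨a, b⟩, hv⟩ := v
  rw [lap_apply, extendByZero_restrict fun w => squareEigenfunction_eq_zero N]
  have hwave := diamondIndicator_wave N k a b hv
  have hup : (b + 1 - 1).negOnePow = -(b - 1).negOnePow := by
    rw [← Int.negOnePow_succ, sub_add_cancel, add_sub_cancel_right]
  have hdown : (b - 1 - 1).negOnePow = -(b - 1).negOnePow := by
    rw [← Int.negOnePow_succ, Int.negOnePow_eq_iff]
    exact ⟨-1, by ring⟩
  simp only [squareEigenfunction, hup, hdown, Units.val_neg]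
  linear_combination ((b - 1).negOnePow : ℤ) * hwave

end SquareEigenfunctions

noncomputable def squareChar (N : ℕ) : SandpileGroup (squareDomain N) →+ (Fin N → ZMod 4) :=
  AddMonoidHom.pi fun k => sandpileChar 4 (fun w => squareEigenfunction N ((k : ℕ) + 1) w)
    fun v => ⟨-squareEigenfunction N ((k : ℕ) + 1) v, by rw [lap_squareEigenfunction]; ring⟩

lemma squareChar_surjective (N : ℕ) : Function.Surjective (squareChar N) := by
  classical
  refine AddMonoidHom.surjective_of_single_mem_range _ fun j => ?_
  have hj : (((j : ℕ) + 1 : ℤ), (1 : ℤ)) ∈ squareDomain N := by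
    rw [mem_squareDomain]
    have := j.isLt
    omega
  refine ⟨sandMk _ (Pi.single ⟨_, hj⟩ 1), funext fun k => ?_⟩
  simp only [squareChar, AddMonoidHom.pi_apply, sandpileChar_mk_single,
    squareEigenfunction_bottom_row N hj, Pi.single_apply]
  have hjk : ((j : ℕ) + 1 : ℤ) = (k : ℕ) + 1 ↔ k = j := by omega
  simp [hjk]

theorem square_has_Z4_powers_general (N : ℕ) :
    ∃ S : AddSubgroup (SandpileGroup (squareDomain N)),
      Nonempty (↥S ≃+ (Fin N → ZMod 4)) :=
  AddCommGroup.exists_addSubgroup_addEquiv_of_surjective _ (squareChar_surjective N)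

/-- For every `N ≥ 1`, the sandpile group on the `N×N` square
domain contains a subgroup isomorphic to the direct sum of `N` copies of `ℤ/4ℤ`. -/
theorem square_has_Z4_powers (N : ℕ) (hN : 1 ≤ N) :
    ∃ S : AddSubgroup (SandpileGroup (squareDomain N)),
      Nonempty (↥S ≃+ (Fin N → ZMod 4)) :=
  square_has_Z4_powers_general N
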